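/- arXiv:math/0210430 — 6 statements merged into one kernel-verified Lean document; each statement's English description precedes it below -/
import Mathlib

section
/- Let q ∈ ℂ with |q| > 1. For any c ∈ ℂ*, the operator f(z) ↦ c·z^{-1}·f(qz) − f(z) is bijective on the field of formal Laurent series ℂ((z)). -/
/-- Formal Laurent series over ℂ, modeled as coefficient functions `ℤ → ℂ`
whose support is bounded below. -/
abbrev FormalLaurent : Type := {f : ℤ → ℂ // ∃ N : ℤ, ∀ k < N, f k = 0}

/-!
Write the operator on coefficients as `(Tf)_k = a_k f_{k+1} − f_k` with `a_k = c q^{k+1} ≠ 0`.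
Both injectivity and surjectivity come from reading `Tf = g` as the forward recursion
`f_{k+1} = (f_k + g_k) / a_k`: a coefficient sequence vanishing below some index is
determined by `g`, and starting the recursion with zeros below the support of `g` produces
a solution whose support is again bounded below.
-/

section ShiftRecursion

variable {K : Type*} [Field K] {a : ℤ → K}

theorem eq_zero_of_mul_shift_sub_eq_zero (ha : ∀ k, a k ≠ 0) {f : ℤ → K} {N : ℤ}
    (hf : ∀ k < N, f k = 0) (hTf : ∀ k, a k * f (k + 1) - f k = 0) : f = 0 := by
  funext k
  rcases lt_or_ge k (N - 1) with hk | hk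
  · exact hf k (by omega)
  induction k, hk using Int.leInduction with
  | base => exact hf _ (by omega)
  | succ k _ ih =>
    simpa [ih, ha k] using hTf k

/-- The value at `n` is the coefficient `f_{N+n}` of the solution whose coefficients below `N`
vanish. -/
noncomputable def forwardSolution (a g : ℤ → K) (N : ℤ) : ℕ → K
  | 0 => 0
  | n + 1 => (forwardSolution a g N n + g (N + n)) / a (N + n)

theorem exists_mul_shift_sub_eq (ha : ∀ k, a k ≠ 0) {g : ℤ → K} {N : ℤ}
    (hg : ∀ k < N, g k = 0) :
    ∃ f : ℤ → K, (∀ k < N, f k = 0) ∧ ∀ k, a k * f (k + 1) - f k = g k := by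
  refine ⟨fun k => forwardSolution a g N (k - N).toNat, fun k hk => ?_, fun k => ?_⟩
  · simp only [show (k - N).toNat = 0 by omega, forwardSolution]
  rcases lt_or_ge k N with hk | hk
  · have h₀ : (k - N).toNat = 0 := by omega
    have h₁ : (k + 1 - N).toNat = 0 := by omega
    simp [h₀, h₁, forwardSolution, hg k hk]
  · obtain ⟨n, rfl⟩ : ∃ n : ℕ, k = N + n := ⟨(k - N).toNat, by omega⟩
    have h₀ : (N + n - N).toNat = n := by omega
    have h₁ : (N + n + 1 - N).toNat = n + 1 := by omega
    simp only [h₀, h₁, forwardSolution]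
    rw [mul_div_cancel₀ _ (ha _)]
    ring

end ShiftRecursion

/-- For `|q| > 1` and any `c ∈ ℂ*`, the operator `f(z) ↦ c·z⁻¹·f(qz) − f(z)`,
acting on coefficients by `(Tf)_k = c q^{k+1} f_{k+1} − f_k`, is bijective on `ℂ((z))`. -/
theorem stmt_1 (q c : ℂ) (hq : 1 < ‖q‖) (hc : c ≠ 0) :
    Function.Bijective (fun f : FormalLaurent =>
      (⟨fun k => c * q ^ (k + 1) * f.1 (k + 1) - f.1 k,
        by
          obtain ⟨N, hN⟩ := f.2
          refine ⟨N - 1, fun k hk => ?_⟩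
          show c * q ^ (k + 1) * f.1 (k + 1) - f.1 k = 0
          rw [hN (k + 1) (by omega), hN k (by omega)]
          ring⟩ : FormalLaurent)) := by
  have hq₀ : q ≠ 0 := norm_pos_iff.mp (one_pos.trans hq)
  have ha : ∀ k : ℤ, c * q ^ (k + 1) ≠ 0 := fun k => mul_ne_zero hc (zpow_ne_zero _ hq₀)
  constructor
  · rintro ⟨f₁, N₁, hf₁⟩ ⟨f₂, N₂, hf₂⟩ h
    have hT : ∀ k, c * q ^ (k + 1) * f₁ (k + 1) - f₁ k = c * q ^ (k + 1) * f₂ (k + 1) - f₂ k :=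
      congrFun (congrArg Subtype.val h)
    have hdiff : f₁ - f₂ = 0 := by
      refine eq_zero_of_mul_shift_sub_eq_zero ha (N := min N₁ N₂) (fun k hk => ?_) (fun k => ?_)
      · simp [hf₁ k (by omega), hf₂ k (by omega)]
      · simp only [Pi.sub_apply]
        linear_combination hT k
    exact Subtype.ext (sub_eq_zero.mp hdiff)
  · rintro ⟨g, N, hg⟩
    obtain ⟨f, hf, hTf⟩ := exists_mul_shift_sub_eq ha hg
    exact ⟨⟨f, N, hf⟩, Subtype.ext (funext hTf)⟩
end

section
/- Let q ∈ ℂ with |q| > 1 and c ∈ ℂ*. If g(z) = Σ g_k z^k is a convergent Laurent series (positive radius of convergence) and f is the formal Laurent series defined by c^k q^{k(k-1)/2} f_k = Σ_{i<k} c^i q^{i(i-1)/2} g_i, so that c z^{-1} f(qz) − f(z) = g(z), then f is also convergent. -/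
/-!
Comparing coefficients, `c q^{n+1} f_{n+1} = f_n + g_n`. Since `|q| ≥ 1`, this gives
`|f_{n+1}| ≤ D (|f_n| + |g_n|)` with `D = 1/(|c||q|)`, and such a recursive bound with a
geometrically bounded forcing term `|g_n| ≤ B C^n` propagates to `|f_n| ≤ B' (D + C)^n`.
-/

/-- A formal Laurent series (given by its coefficient function) is *convergent* if it
defines a germ of a meromorphic function at `0`, i.e. its coefficients are geometrically
bounded: `|f_k| ≤ B·C^k` for `k ≥ 0`. -/
def ConvergentCoeffs (f : ℤ → ℂ) : Prop :=
  ∃ B C : ℝ, 0 < B ∧ 0 < C ∧ ∀ k : ℕ, ‖f k‖ ≤ B * C ^ k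

theorem exists_geometric_bound_of_le_mul_add {a b : ℕ → ℝ} {D B C : ℝ} (hD : 0 ≤ D)
    (hB : 0 < B) (hC : 0 < C) (hb : ∀ n, b n ≤ B * C ^ n)
    (ha : ∀ n, a (n + 1) ≤ D * (a n + b n)) :
    ∃ B' C' : ℝ, 0 < B' ∧ 0 < C' ∧ ∀ n, a n ≤ B' * C' ^ n := by
  set B' := |a 0| + D * B / C + 1 with hB'_def
  have hB' : 0 < B' := by positivity
  have hDB : D * B ≤ B' * C := by
    rw [← div_le_iff₀ hC]
    linarith [abs_nonneg (a 0)]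
  refine ⟨B', D + C, hB', by positivity, fun n => ?_⟩
  induction n with
  | zero =>
    have : 0 ≤ D * B / C := by positivity
    rw [pow_zero, mul_one, hB'_def]
    linarith [le_abs_self (a 0)]
  | succ n ih =>
    have hCpow : C ^ n ≤ (D + C) ^ n := pow_le_pow_left₀ hC.le (by linarith) n
    calc a (n + 1) ≤ D * (B' * (D + C) ^ n + B * C ^ n) :=
          (ha n).trans (by gcongr; exact hb n)
      _ = D * B' * (D + C) ^ n + D * B * C ^ n := by ring
      _ ≤ D * B' * (D + C) ^ n + B' * C * (D + C) ^ n := by gcongr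
      _ = B' * (D + C) ^ (n + 1) := by ring

theorem norm_le_of_mul_pow_succ_mul_eq {𝕜 : Type*} [NormedDivisionRing 𝕜] {q c x y : 𝕜}
    (hq : 1 ≤ ‖q‖) (hc : c ≠ 0) (n : ℕ) (h : c * q ^ (n + 1) * x = y) :
    ‖x‖ ≤ (‖c‖ * ‖q‖)⁻¹ * ‖y‖ := by
  have hcq : 0 < ‖c‖ * ‖q‖ := by have := norm_pos_iff.mpr hc; positivity
  rw [← div_eq_inv_mul, le_div_iff₀ hcq, ← h, norm_mul, norm_mul, norm_pow, mul_comm ‖x‖]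
  gcongr
  exact le_self_pow₀ hq n.succ_ne_zero

theorem stmt_2_general (q c : ℂ) (hq : 1 < ‖q‖) (hc : c ≠ 0)
    (f g : ℤ → ℂ)
    (hg : ConvergentCoeffs g)
    (heq : ∀ k : ℤ, c * q ^ (k + 1) * f (k + 1) - f k = g k) :
    ConvergentCoeffs f := by
  obtain ⟨B, C, hB, hC, hgB⟩ := hg
  refine exists_geometric_bound_of_le_mul_add (D := (‖c‖ * ‖q‖)⁻¹) (by positivity) hB hC hgB
    fun n => ?_
  have hrec := heq n
  rw [← Nat.cast_add_one, zpow_natCast] at hrec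
  calc ‖f (n + 1 : ℕ)‖ ≤ (‖c‖ * ‖q‖)⁻¹ * ‖f n + g n‖ :=
        norm_le_of_mul_pow_succ_mul_eq hq.le hc n (by linear_combination hrec)
    _ ≤ (‖c‖ * ‖q‖)⁻¹ * (‖f n‖ + ‖g n‖) := by gcongr; exact norm_add_le _ _

/-- Let `|q| > 1`, `c ≠ 0`. If `g` is a convergent Laurent series and `f` is the formal
Laurent series solving `c·z⁻¹·f(qz) − f(z) = g(z)` (coefficientwise:
`c q^{k+1} f_{k+1} − f_k = g_k`, which determines `f` uniquely by the recursion
`c^k q^{k(k-1)/2} f_k = Σ_{i<k} c^i q^{i(i-1)/2} g_i`), then `f` is convergent as well. -/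
theorem stmt_2 (q c : ℂ) (hq : 1 < ‖q‖) (hc : c ≠ 0)
    (f g : ℤ → ℂ)
    (hfN : ∃ N : ℤ, ∀ k < N, f k = 0) (hgN : ∃ N : ℤ, ∀ k < N, g k = 0)
    (hg : ConvergentCoeffs g)
    (heq : ∀ k : ℤ, c * q ^ (k + 1) * f (k + 1) - f k = g k) :
    ConvergentCoeffs f :=
  stmt_2_general q c hq hc f g hg heq
end

section
/- Let K be a field with automorphism σ such that the σ-constants of K are exactly ℂ and σ − 1 : K → K has image of codimension 1 (complement ℂ). Let K_k[ℓ] be polynomials of degree ≤ k in a transcendental element ℓ with σ(ℓ) = ℓ + 1. Then for every k ≥ 1 the sequence 0 → ℂ → K_k[ℓ] → K_{k-1}[ℓ] → 0, with middle map σ − 1, is exact: σ − 1 maps K_k[ℓ] onto K_{k-1}[ℓ] with kernel the constants ℂ. -/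
open Polynomial

/-- Let `K` be a field with automorphism `σ` whose `σ`-constants are exactly `ℂ` and such
that `K = ℂ ⊕ im(σ − 1)` (the image of `σ − 1` has complement `ℂ`).  Model the ring
`K[ℓ]`, where `ℓ` is transcendental with `σ(ℓ) = ℓ + 1`, as `Polynomial K` with the
extended endomorphism `S : p(X) ↦ (σp)(X + 1)` (so `S X = X + 1`).  Then for every
`k ≥ 1`, the sequence `0 → ℂ → K_k[ℓ] → K_{k-1}[ℓ] → 0` with middle map `σ − 1` is exact:
`σ − 1` maps the polynomials of degree `≤ k` onto those of degree `≤ k − 1`, and its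
kernel on degree `≤ k` consists exactly of the constants from `ℂ`. -/
theorem stmt_5 {K : Type*} [Field K] [Algebra ℂ K] (σ : K ≃+* K)
    (hconst : ∀ a : K, σ a = a ↔ ∃ c : ℂ, a = algebraMap ℂ K c)
    (hsurj : ∀ g : K, ∃ c : ℂ, ∃ a : K, g = algebraMap ℂ K c + (σ a - a))
    (hcompl : ∀ (a : K) (c : ℂ), σ a - a = algebraMap ℂ K c → c = 0)
    (k : ℕ) (hk : 1 ≤ k) :
    (∀ g : Polynomial K, g.natDegree ≤ k - 1 →
        ∃ p : Polynomial K, p.natDegree ≤ k ∧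
          (p.map (σ : K →+* K)).comp (Polynomial.X + 1) - p = g) ∧
    (∀ p : Polynomial K, p.natDegree ≤ k →
        ((p.map (σ : K →+* K)).comp (Polynomial.X + 1) = p ↔
          ∃ c : ℂ, p = Polynomial.C (algebraMap ℂ K c))) := by
  haveI : CharZero K := charZero_of_injective_algebraMap (algebraMap ℂ K).injective
  have hfix : ∀ c : ℂ, σ (algebraMap ℂ K c) = algebraMap ℂ K c := fun c =>
    (hconst _).mpr ⟨c, rfl⟩
  set S : K[X] → K[X] := fun p => (p.map (σ : K →+* K)).comp (X + 1) with hSdef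
  have hSadd : ∀ p q : K[X], S (p + q) = S p + S q := by
    intro p q; simp [hSdef, Polynomial.map_add, add_comp]
  have hSmon : ∀ (a : K) (n : ℕ), S (C a * X ^ n) = C (σ a) * (X + 1) ^ n := by
    intro a n
    simp [hSdef, Polynomial.map_mul, Polynomial.map_pow, mul_comp, pow_comp]
  have hSC : ∀ a : K, S (C a) = C (σ a) := by
    intro a; simp [hSdef]
  -- Surjectivity lemma
  have key : ∀ m : ℕ, ∀ g : K[X], g.natDegree ≤ m →
      ∃ p : K[X], p.natDegree ≤ m + 1 ∧ S p - p = g := by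
    intro m
    induction m with
    | zero =>
      intro g hg
      obtain ⟨c, a, hca⟩ := hsurj (g.coeff 0)
      have hg0 : g = C (g.coeff 0) := (Polynomial.eq_C_of_natDegree_le_zero hg)
      refine ⟨C (algebraMap ℂ K c) * X + C a, ?_, ?_⟩
      · refine (natDegree_add_le _ _).trans (max_le ?_ ?_)
        · exact (natDegree_C_mul_le _ _).trans (by simp)
        · simp
      · have h1 : S (C (algebraMap ℂ K c) * X + C a)
            = C (algebraMap ℂ K c) * (X + 1) + C (σ a) := by
          rw [hSadd, hSC]
          have := hSmon (algebraMap ℂ K c) 1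
          simpa [hfix] using this
        rw [h1, hg0, hca, map_add, map_sub]
        ring
    | succ m ih =>
      intro g hg
      obtain ⟨c, a, hca⟩ := hsurj (g.coeff (m + 1))
      set e : K := algebraMap ℂ K c * ((m + 2 : ℕ) : K)⁻¹ with he
      have hσe : σ e = e := by
        rw [he, map_mul, hfix]
        congr 1
        rw [map_inv₀]
        congr 1
        rw [map_natCast]
      set p0 : K[X] := C e * X ^ (m + 2) + C a * X ^ (m + 1) with hp0
      set r : K[X] := S p0 - p0 with hr
      have hrcoeff : ∀ j : ℕ, r.coeff j =
          e * ((m + 2).choose j : K) - e * (X ^ (m + 2) : K[X]).coeff j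
          + (σ a * ((m + 1).choose j : K) - a * (X ^ (m + 1) : K[X]).coeff j) := by
        intro j
        have : r = C e * (X + 1) ^ (m + 2) - C e * X ^ (m + 2)
            + (C (σ a) * (X + 1) ^ (m + 1) - C a * X ^ (m + 1)) := by
          rw [hr, hp0, hSadd, hSmon, hSmon, hσe]; ring
        rw [this]
        simp [coeff_add, coeff_sub, coeff_C_mul, coeff_X_add_one_pow]
      have hm2 : ((m + 2 : ℕ) : K) ≠ 0 := Nat.cast_ne_zero.mpr (by omega)
      have hrm1 : r.coeff (m + 1) = g.coeff (m + 1) := by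
        rw [hrcoeff]
        rw [coeff_X_pow, coeff_X_pow]
        simp only [if_neg (by omega : ¬(m + 1 = m + 2)), if_pos rfl]
        have hch : (((m + 2).choose (m + 1) : ℕ) : K) = ((m + 2 : ℕ) : K) := by
          norm_cast
          rw [Nat.choose_succ_self_right]
        have hee : e * ((m + 2 : ℕ) : K) = algebraMap ℂ K c := by
          rw [he, mul_assoc, inv_mul_cancel₀ hm2, mul_one]
        rw [hch, hee, Nat.choose_self, hca]
        push_cast
        ring
      have hrdeg : r.natDegree ≤ m + 1 := by
        rw [natDegree_le_iff_coeff_eq_zero]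
        intro N hN
        rw [hrcoeff, coeff_X_pow, coeff_X_pow,
          Nat.choose_eq_zero_of_lt (by omega : m + 1 < N),
          if_neg (by omega : ¬ N = m + 1)]
        rcases eq_or_ne N (m + 2) with h | h
        · rw [if_pos h, h, Nat.choose_self]
          push_cast
          ring
        · rw [if_neg h, Nat.choose_eq_zero_of_lt (by omega : m + 2 < N)]
          push_cast
          ring
      have hgr : (g - r).natDegree ≤ m := by
        rw [natDegree_le_iff_coeff_eq_zero]
        intro N hN
        rcases eq_or_ne N (m + 1) with h | h
        · rw [coeff_sub, h, hrm1, sub_self]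
        · rw [coeff_sub,
            natDegree_le_iff_coeff_eq_zero.mp hg N (by omega),
            natDegree_le_iff_coeff_eq_zero.mp hrdeg N (by omega), sub_self]
      obtain ⟨p1, hp1deg, hp1⟩ := ih (g - r) hgr
      refine ⟨p0 + p1, ?_, ?_⟩
      · refine (natDegree_add_le _ _).trans (max_le ?_ (by omega))
        rw [hp0]
        refine (natDegree_add_le _ _).trans (max_le ?_ ?_)
        · exact (natDegree_C_mul_le _ _).trans (by simp)
        · exact (natDegree_C_mul_le _ _).trans (by simp)
      · rw [hSadd]
        have : S p0 + S p1 - (p0 + p1) = (S p0 - p0) + (S p1 - p1) := by ring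
        rw [this, ← hr, hp1]
        ring
  -- Kernel lemma
  have ker : ∀ n : ℕ, ∀ p : K[X], p.natDegree ≤ n → S p = p →
      ∃ c : ℂ, p = C (algebraMap ℂ K c) := by
    intro n
    induction n with
    | zero =>
      intro p hp hSp
      have hpC : p = C (p.coeff 0) := Polynomial.eq_C_of_natDegree_le_zero hp
      rw [hpC, hSC] at hSp
      have : σ (p.coeff 0) = p.coeff 0 := C_injective hSp
      obtain ⟨c, hc⟩ := (hconst _).mp this
      exact ⟨c, by rw [hpC, hc]⟩
    | succ n ih =>
      intro p hp hSp
      -- S commutes with derivative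
      have hder : S (derivative p) = derivative p := by
        have h := congrArg derivative hSp
        rw [hSdef] at h ⊢
        simp only [derivative_comp, derivative_map] at h
        simpa using h
      have hdeg : (derivative p).natDegree ≤ n := by
        have := natDegree_derivative_le p
        omega
      obtain ⟨c', hc'⟩ := ih _ hdeg hder
      -- derivative is constant, so in char 0 natDegree p ≤ 1
      have h1 : p.natDegree ≤ 1 := by
        rw [natDegree_le_iff_coeff_eq_zero]
        intro N hN
        have h := congrArg (fun q => Polynomial.coeff q (N - 1)) hc'
        simp only [coeff_derivative, coeff_C, if_neg (by omega : ¬ N - 1 = 0)] at h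
        have h' : p.coeff (N - 1 + 1) * ((N - 1 : ℕ) + 1 : K) = 0 := h
        have hN1 : N - 1 + 1 = N := by omega
        rw [hN1] at h'
        have hne : ((N - 1 : ℕ) + 1 : K) ≠ 0 := by
          have : (((N - 1) + 1 : ℕ) : K) ≠ 0 := Nat.cast_ne_zero.mpr (by omega)
          simpa using this
        exact (mul_eq_zero.mp h').resolve_right hne
      have hpeq : p = C (p.coeff 1) * X + C (p.coeff 0) :=
        Polynomial.eq_X_add_C_of_natDegree_le_one h1
      set a1 := p.coeff 1
      set a0 := p.coeff 0
      have hSform : S p = C (σ a1) * X + C (σ a1 + σ a0) := by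
        have h2 : S (C a1 * X) = C (σ a1) * (X + 1) := by
          have := hSmon a1 1
          simpa using this
        rw [hpeq, hSadd, hSC, h2, map_add]
        ring
      rw [hSform] at hSp
      have hc1 : σ a1 = a1 := by
        have := congrArg (fun q => Polynomial.coeff q 1) hSp
        simpa [hpeq, coeff_add, coeff_C_mul, coeff_C, coeff_X] using this
      have hc0 : σ a1 + σ a0 = a0 := by
        have := congrArg (fun q => Polynomial.coeff q 0) hSp
        simpa [hpeq, coeff_add, coeff_C_mul, coeff_C, coeff_X] using this
      obtain ⟨c1, hc1'⟩ := (hconst a1).mp hc1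
      have : σ a0 - a0 = algebraMap ℂ K (-c1) := by
        rw [map_neg, ← hc1', ← hc1]
        linear_combination hc0
      have hc10 : (-c1 : ℂ) = 0 := hcompl _ _ this
      have hc1z : c1 = 0 := by simpa using neg_eq_zero.mp hc10
      have ha1 : a1 = 0 := by rw [hc1', hc1z, map_zero]
      have ha0 : σ a0 = a0 := by
        rw [hc1, ha1, zero_add] at hc0
        exact hc0
      obtain ⟨c, hc⟩ := (hconst a0).mp ha0
      exact ⟨c, by rw [hpeq, ha1, hc]; simp⟩
  constructor
  · intro g hg
    obtain ⟨p, hpdeg, hp⟩ := key (k - 1) g hg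
    exact ⟨p, by omega, hp⟩
  · intro p hp
    constructor
    · intro hSp
      exact ker k p hp hSp
    · rintro ⟨c, rfl⟩
      change S _ = _
      rw [hSC, hfix]
end

section
/- Let (M, Φ) be a difference module over a difference field (K, σ): M a finite-dimensional K-vector space, Φ a σ-semilinear automorphism. Let (e_0, …, e_{n-1}) be a cyclic basis with Φ(e_i) = e_{i+1} for i ≤ n−2 and Φ(e_{n-1}) = −a_n e_0 − ⋯ − a_1 e_{n-1}, a_n ≠ 0. Let Φ^∨ be the dual (contragredient) semilinear automorphism on M^∨, characterized by ⟨Φ^∨(u), Φ(v)⟩ = σ(⟨u, v⟩). Then e_{n-1}^∨ is a cyclic vector of (M^∨, Φ^∨), and its minimal polynomial is P^∨ = σ^n + b_1 σ^{n-1} + ⋯ + b_n with b_i = σ^{n-i-1}(a_{n-i})/σ^{n-1}(a_n) for 1 ≤ i ≤ n (convention a_0 = 1). -/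
/-!
Let `w = e_{n-1}^∨` and `f_i = e_i^∨`. Pairing against the basis `Φ e_t` (which spans because
`a n ≠ 0`) shows that `Φ^∨` is `σ`-semilinear and that `f_0 = -a_n Φ^∨ w` and
`f_{i+1} = Φ^∨ f_i - a_{n-i-1} Φ^∨ w`. Unwinding this recursion expresses each `f_i` as
`-∑_{k ≤ i} σ^k(a_{n-i+k}) (Φ^∨)^{k+1} w`. Hence the `n` iterates `(Φ^∨)^k w`, `k < n`, span
the `n`-dimensional dual and are independent, and the case `i = n - 1` reads
`∑_{m ≤ n} σ^{m-1}(a_m) (Φ^∨)^m w = 0`; dividing by `σ^{n-1}(a_n)` gives `P^∨`.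
-/

open Finset Submodule

section SemilinearDual

variable {K V ι : Type*} [Field K] [AddCommGroup V] [Module K V] {σ : RingAut K}
  {Φ : V → V} {v : ι → V} {Φd : Module.Dual K V → Module.Dual K V}

theorem dual_map_add_of_span (hspan : span K (Set.range (Φ ∘ v)) = ⊤)
    (hdual : ∀ u x, Φd u (Φ x) = σ (u x)) (u u' : Module.Dual K V) :
    Φd (u + u') = Φd u + Φd u' :=
  LinearMap.ext_on_range hspan fun t => by simp [hdual]

theorem dual_map_smul_of_span (hspan : span K (Set.range (Φ ∘ v)) = ⊤)
    (hdual : ∀ u x, Φd u (Φ x) = σ (u x)) (c : K) (u : Module.Dual K V) :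
    Φd (c • u) = σ c • Φd u :=
  LinearMap.ext_on_range hspan fun t => by simp [hdual]

theorem dual_map_sum_smul_of_span (hspan : span K (Set.range (Φ ∘ v)) = ⊤)
    (hdual : ∀ u x, Φd u (Φ x) = σ (u x)) {α : Type*} (s : Finset α) (c : α → K)
    (u : α → Module.Dual K V) :
    Φd (∑ k ∈ s, c k • u k) = ∑ k ∈ s, σ (c k) • Φd (u k) := by
  rw [← AddMonoidHom.mk'_apply Φd (dual_map_add_of_span hspan hdual), map_sum]
  simp only [AddMonoidHom.mk'_apply, dual_map_smul_of_span hspan hdual]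

end SemilinearDual

theorem span_range_proj_eq_top (K ι : Type*) [Field K] [Fintype ι] [DecidableEq ι] :
    span K (Set.range fun i : ι => (LinearMap.proj i : Module.Dual K (ι → K))) = ⊤ := by
  rw [← (Pi.basisFun K ι).dualBasis.span_eq]
  congr
  ext i x
  simp

section Cyclic

variable {K : Type*} [Field K] {n : ℕ} {σ : RingAut K} {a : ℕ → K} {Φ : (Fin n → K) → Fin n → K}
  {Φd : Module.Dual K (Fin n → K) → Module.Dual K (Fin n → K)}

/-- `Φ` acts on the standard basis by the companion matrix of `a`:
`Φ e_t = e_{t+1}` for `t < n - 1` and `Φ e_{n-1} = -∑ j, a (n - j) e_j`. -/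
def IsCompanionAction (a : ℕ → K) (Φ : (Fin n → K) → Fin n → K) : Prop :=
  ∀ i t : Fin n, Φ (Pi.single t 1) i =
    (if (i : ℕ) = t + 1 then 1 else 0) - if (t : ℕ) = n - 1 then a (n - i) else 0

theorem isCompanionAction_of_cyclic (hn : 1 ≤ n)
    (hcyc : ∀ (i : Fin n) (hi : (i : ℕ) + 1 < n),
      Φ (Pi.single i (1 : K)) = Pi.single (⟨(i : ℕ) + 1, hi⟩ : Fin n) 1)
    (hlast : Φ (Pi.single (⟨n - 1, Nat.sub_one_lt_of_lt hn⟩ : Fin n) (1 : K)) =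
      - ∑ j : Fin n, a (n - (j : ℕ)) • (Pi.single j (1 : K) : Fin n → K)) :
    IsCompanionAction a Φ := by
  intro i t
  by_cases ht : (t : ℕ) + 1 < n
  · rw [hcyc t ht, if_neg (show (t : ℕ) ≠ n - 1 by omega), sub_zero]
    simp [Pi.single_apply, Fin.ext_iff]
  · rw [show t = ⟨n - 1, Nat.sub_one_lt_of_lt hn⟩ from Fin.ext (by simp only; omega), hlast,
      if_neg (show (i : ℕ) ≠ n - 1 + 1 by omega), if_pos rfl, zero_sub]
    simp [Pi.single_apply]

theorem IsCompanionAction.span_range_eq_top (hΦ : IsCompanionAction a Φ) (han : a n ≠ 0) :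
    span K (Set.range (Φ ∘ fun t : Fin n => Pi.single t 1)) = ⊤ := by
  set S := span K (Set.range (Φ ∘ fun t : Fin n => Pi.single t 1))
  have hmem (t : Fin n) : Φ (Pi.single t 1) ∈ S := subset_span ⟨t, rfl⟩
  have hsucc (j : Fin n) (hj : (j : ℕ) ≠ 0) : Pi.single j 1 ∈ S := by
    have := j.isLt
    convert hmem ⟨(j : ℕ) - 1, by omega⟩ using 1
    ext i
    rw [hΦ]
    simp only [Pi.single_apply, Fin.ext_iff]
    split_ifs <;> first | omega | simp
  have hzero (j : Fin n) (hj : (j : ℕ) = 0) : Pi.single j 1 ∈ S := by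
    have hscaled : a n • Pi.single j 1 = -Φ (Pi.single ⟨n - 1, by omega⟩ 1) -
        ∑ t : Fin n, (if (t : ℕ) = 0 then 0 else a (n - t)) • Pi.single t (1 : K) := by
      ext i
      simp only [Pi.smul_apply, Pi.sub_apply, Pi.neg_apply, Finset.sum_apply]
      rw [hΦ]
      simp only [Pi.single_apply, smul_eq_mul, mul_ite, mul_one, mul_zero, Finset.sum_ite_eq,
        Finset.mem_univ, if_true]
      simp only [Fin.ext_iff, hj]
      split_ifs with hi0 <;> first | omega | simp [hi0]
    rw [← inv_smul_smul₀ han (Pi.single j (1 : K) : Fin n → K), hscaled]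
    refine smul_mem _ _ (sub_mem (neg_mem (hmem _)) (sum_mem fun t _ => ?_))
    split_ifs with ht
    · rw [zero_smul]
      exact zero_mem _
    · exact smul_mem _ _ (hsucc t ht)
  rw [eq_top_iff, ← (Pi.basisFun K (Fin n)).span_eq, span_le]
  rintro _ ⟨j, rfl⟩
  rw [Pi.basisFun_apply]
  by_cases hj : (j : ℕ) = 0
  · exact hzero j hj
  · exact hsucc j hj

theorem IsCompanionAction.proj_zero (hΦ : IsCompanionAction a Φ) (han : a n ≠ 0) (hn : 1 ≤ n)
    (hdual : ∀ u x, Φd u (Φ x) = σ (u x)) :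
    LinearMap.proj (⟨0, hn⟩ : Fin n) =
      -a n • Φd (LinearMap.proj ⟨n - 1, Nat.sub_one_lt_of_lt hn⟩) := by
  refine LinearMap.ext_on_range (hΦ.span_range_eq_top han) fun t => ?_
  simp only [Function.comp_apply, LinearMap.proj_apply, LinearMap.smul_apply, hdual, hΦ _ t,
    Pi.single_apply, Fin.ext_iff, smul_eq_mul]
  split_ifs <;> first | omega | simp [*]

theorem IsCompanionAction.proj_succ (hΦ : IsCompanionAction a Φ) (han : a n ≠ 0)
    (hdual : ∀ u x, Φd u (Φ x) = σ (u x)) (i : ℕ) (hi : i + 1 < n) :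
    LinearMap.proj (⟨i + 1, hi⟩ : Fin n) = Φd (LinearMap.proj ⟨i, by omega⟩) -
      a (n - (i + 1)) • Φd (LinearMap.proj ⟨n - 1, by omega⟩) := by
  refine LinearMap.ext_on_range (hΦ.span_range_eq_top han) fun t => ?_
  simp only [Function.comp_apply, LinearMap.proj_apply, LinearMap.sub_apply,
    LinearMap.smul_apply, hdual, hΦ _ t, Pi.single_apply, Fin.ext_iff, smul_eq_mul]
  split_ifs <;> first | omega | simp [*]

theorem IsCompanionAction.proj_eq_sum_iterate (hΦ : IsCompanionAction a Φ) (han : a n ≠ 0)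
    (hdual : ∀ u x, Φd u (Φ x) = σ (u x)) (i : ℕ) (hi : i < n) :
    LinearMap.proj (⟨i, hi⟩ : Fin n) = ∑ k ∈ range (i + 1),
      -(σ ^ k) (a (n - i + k)) • Φd^[k + 1] (LinearMap.proj ⟨n - 1, by omega⟩) := by
  induction i with
  | zero => simp [hΦ.proj_zero han (by omega) hdual]
  | succ i ih =>
    rw [hΦ.proj_succ han hdual i hi, ih (by omega),
      dual_map_sum_smul_of_span (hΦ.span_range_eq_top han) hdual, sum_range_succ' _ (i + 1),
      sub_eq_add_neg]
    congr 1
    · refine sum_congr rfl fun k _ => ?_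
      rw [map_neg, ← RingAut.mul_apply, ← pow_succ', ← Function.iterate_succ_apply' Φd,
        show n - i + k = n - (i + 1) + (k + 1) by omega]
    · rw [zero_add, Function.iterate_one, pow_zero, add_zero]
      exact (neg_smul (M := Module.Dual K (Fin n → K)) _ _).symm

theorem IsCompanionAction.linearIndependent_iterate (hΦ : IsCompanionAction a Φ) (han : a n ≠ 0)
    (hdual : ∀ u x, Φd u (Φ x) = σ (u x)) (hn : 1 ≤ n) :
    LinearIndependent K (fun i : Fin n =>
      Φd^[(i : ℕ)] (LinearMap.proj (⟨n - 1, Nat.sub_one_lt_of_lt hn⟩ : Fin n))) := by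
  refine linearIndependent_of_top_le_span_of_card_eq_finrank ?_
    (by simp [Subspace.dual_finrank_eq])
  rw [← span_range_proj_eq_top K (Fin n), span_le]
  rintro _ ⟨⟨i, hi⟩, rfl⟩
  simp only [SetLike.mem_coe]
  by_cases hlast : i = n - 1
  · subst hlast
    exact subset_span ⟨⟨0, hn⟩, rfl⟩
  · rw [hΦ.proj_eq_sum_iterate han hdual i hi]
    refine sum_mem fun k hk => smul_mem _ _ (subset_span ⟨⟨k + 1, ?_⟩, rfl⟩)
    rw [mem_range] at hk
    omega

theorem IsCompanionAction.sum_range_iterate_eq_zero (hΦ : IsCompanionAction a Φ)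
    (ha0 : a 0 = 1) (han : a n ≠ 0) (hdual : ∀ u x, Φd u (Φ x) = σ (u x)) (hn : 1 ≤ n) :
    ∑ m ∈ range (n + 1), (σ ^ (m - 1)) (a m) •
      Φd^[m] (LinearMap.proj (⟨n - 1, Nat.sub_one_lt_of_lt hn⟩ : Fin n)) = 0 := by
  have hlast := hΦ.proj_eq_sum_iterate han hdual (n - 1) (by omega)
  rw [sum_range_succ', Function.iterate_zero, id, zero_tsub, pow_zero, ha0, map_one, one_smul,
    add_eq_zero_iff_eq_neg', ← sum_neg_distrib]
  conv_lhs => rw [hlast, Nat.sub_add_cancel hn]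
  refine sum_congr rfl fun k _ => ?_
  rw [add_tsub_cancel_right, show n - (n - 1) + k = k + 1 by omega]
  exact neg_smul (M := Module.Dual K (Fin n → K)) _ _

theorem IsCompanionAction.iterate_add_sum_eq_zero (hΦ : IsCompanionAction a Φ) (ha0 : a 0 = 1)
    (han : a n ≠ 0) (hdual : ∀ u x, Φd u (Φ x) = σ (u x)) (hn : 1 ≤ n) :
    Φd^[n] (LinearMap.proj (⟨n - 1, Nat.sub_one_lt_of_lt hn⟩ : Fin n)) +
      ∑ i ∈ Icc 1 n, ((σ ^ (n - i - 1)) (a (n - i)) / (σ ^ (n - 1)) (a n)) •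
        Φd^[n - i] (LinearMap.proj (⟨n - 1, Nat.sub_one_lt_of_lt hn⟩ : Fin n)) = 0 := by
  set g : ℕ → Module.Dual K (Fin n → K) :=
    fun m => Φd^[m] (LinearMap.proj ⟨n - 1, Nat.sub_one_lt_of_lt hn⟩)
  set c : ℕ → K := fun m => (σ ^ (m - 1)) (a m)
  have hcn : c n ≠ 0 := (map_ne_zero _).2 han
  calc g n + ∑ i ∈ Icc 1 n, (c (n - i) / c n) • g (n - i)
      = (c n)⁻¹ • ∑ m ∈ range (n + 1), c m • g m := by
        rw [← Ico_add_one_right_eq_Icc, sum_Ico_reflect (fun m => (c m / c n) • g m) 1 le_rfl,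
          Nat.sub_self, Nat.add_sub_cancel, ← range_eq_Ico, sum_range_succ, smul_add,
          inv_smul_smul₀ hcn, smul_sum, add_comm]
        simp only [smul_smul, div_eq_inv_mul]
    _ = 0 := by rw [hΦ.sum_range_iterate_eq_zero ha0 han hdual hn, smul_zero]

end Cyclic

/-- Dual of a cyclic difference module (Proposition 2.1.10): let `(M, Φ)` be a difference
module over `(K, σ)` with cyclic basis `(e_0, …, e_{n-1})`, `Φ(e_i) = e_{i+1}` for
`i ≤ n−2` and `Φ(e_{n-1}) = −a_n e_0 − ⋯ − a_1 e_{n-1}` (`a_n ≠ 0`, convention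
`a_0 = 1`).  Let `Φ^∨` be the contragredient semilinear automorphism of `M^∨`,
characterized by `⟨Φ^∨(u), Φ(v)⟩ = σ(⟨u, v⟩)`.  Then `e_{n-1}^∨` is a cyclic vector of
`(M^∨, Φ^∨)` (the iterates `(Φ^∨)^i e_{n-1}^∨`, `i < n`, are independent) and its minimal
polynomial is `P^∨ = σ^n + b_1 σ^{n-1} + ⋯ + b_n` with
`b_i = σ^{n-i-1}(a_{n-i})/σ^{n-1}(a_n)`. -/
theorem stmt_15 {K : Type*} [Field K] (σ : RingAut K) (n : ℕ) (hn : 1 ≤ n)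
    (a : ℕ → K) (ha0 : a 0 = 1) (han : a n ≠ 0)
    (Φ : (Fin n → K) → Fin n → K)
    (hcyc : ∀ (i : Fin n) (hi : (i : ℕ) + 1 < n),
      Φ (Pi.single i (1 : K)) = Pi.single (⟨(i : ℕ) + 1, hi⟩ : Fin n) 1)
    (hlast : Φ (Pi.single (⟨n - 1, by omega⟩ : Fin n) (1 : K)) =
      - ∑ j : Fin n, a (n - (j : ℕ)) • (Pi.single j (1 : K) : Fin n → K))
    (Φd : Module.Dual K (Fin n → K) → Module.Dual K (Fin n → K))
    (hdual : ∀ (u : Module.Dual K (Fin n → K)) (v : Fin n → K), Φd u (Φ v) = σ (u v)) :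
    LinearIndependent K (fun i : Fin n =>
      Φd^[(i : ℕ)] (LinearMap.proj (⟨n - 1, by omega⟩ : Fin n))) ∧
    Φd^[n] (LinearMap.proj (⟨n - 1, by omega⟩ : Fin n)) +
      ∑ i ∈ Finset.Icc 1 n,
        ((σ ^ (n - i - 1)) (a (n - i)) / (σ ^ (n - 1)) (a n)) •
          Φd^[n - i] (LinearMap.proj (⟨n - 1, by omega⟩ : Fin n)) = 0 := by
  have hΦ := isCompanionAction_of_cyclic hn hcyc hlast
  exact ⟨hΦ.linearIndependent_iterate han hdual hn, hΦ.iterate_add_sum_eq_zero ha0 han hdual hn⟩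
end

section
/- Let q ∈ ℂ with |q| > 1, K = ℂ((z)) with σ_q, and let (M, Φ) be a q-difference module over K whose Newton polygon has a single slope μ ∈ ℤ (M pure of slope μ). Let x be a cyclic vector of M and Λ = Σ_{i=0}^{n-1} O·Ψ^i(x) where Ψ = z^{-μ}Φ and O = ℂ[[z]]. Then v_Λ(Φ^k(x)) = μk + O(1) as k → ∞ in ℕ, where v_Λ(y) = sup{j ∈ ℤ : y ∈ z^j Λ}. -/
/-!
Put `Ψ = z^{-μ} Φ`. Since `σ (z^m) = q^m z^m` with `q^m ≠ 0` (`σ` is injective),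
`Φ^k x = u z^{μk} Ψ^k x` with `u ∈ ℂˣ`, so it suffices to show `Ψ^k x ∈ Λ ∖ zΛ`.

Write `Ψ^k x = ∑_{i<n} f_{k,i} Ψ^i x`. The coordinate polynomials `f_k ∈ O[X]` obey
`f_{k+1} = X · σ(f_k) mod p` with `p = X^n + a₁X^{n-1} + ⋯ + aₙ`, so `Ψ^k x ∈ Λ`.
As `σ` fixes constant terms, reducing modulo `z` gives `f_k(0) ≡ X^k mod p(0)` in `ℂ[X]`.
Purity says `p(0) ≠ X^n`, and a monic divisor of `X^k` is a power of `X`, so `p(0) ∤ X^k`;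
thus `f_k(0) ≠ 0`, i.e. `Ψ^k x ∉ zΛ`.
-/

open Polynomial

section MonicOfCoeffs

variable {R : Type*} [Semiring R]

noncomputable def monicOfCoeffs (n : ℕ) (a : ℕ → R) : R[X] :=
  X ^ n + ∑ i ∈ Finset.Icc 1 n, C (a i) * X ^ (n - i)

theorem degree_sum_C_mul_X_pow_sub_lt (n : ℕ) (a : ℕ → R) :
    (∑ i ∈ Finset.Icc 1 n, C (a i) * X ^ (n - i)).degree < (n : WithBot ℕ) := by
  refine (degree_sum_le _ _).trans_lt <| (Finset.sup_lt_iff (WithBot.bot_lt_coe n)).2 fun i hi => ?_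
  have hi := Finset.mem_Icc.1 hi
  exact (degree_C_mul_X_pow_le _ _).trans_lt <| Nat.cast_lt.2 (by omega)

theorem monic_monicOfCoeffs (n : ℕ) (a : ℕ → R) : (monicOfCoeffs n a).Monic :=
  monic_X_pow_add (degree_sum_C_mul_X_pow_sub_lt n a)

theorem natDegree_monicOfCoeffs [Nontrivial R] (n : ℕ) (a : ℕ → R) :
    (monicOfCoeffs n a).natDegree = n := by
  rw [monicOfCoeffs, natDegree_add_eq_left_of_degree_lt, natDegree_X_pow]
  rw [degree_X_pow]
  exact degree_sum_C_mul_X_pow_sub_lt n a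

theorem map_monicOfCoeffs {S : Type*} [Semiring S] (φ : R →+* S) (n : ℕ) (a : ℕ → R) :
    (monicOfCoeffs n a).map φ = monicOfCoeffs n (φ ∘ a) := by
  simp [monicOfCoeffs, Polynomial.map_sum]

theorem coeff_monicOfCoeffs {n j : ℕ} (hj : j ∈ Finset.Icc 1 n) (a : ℕ → R) :
    (monicOfCoeffs n a).coeff (n - j) = a j := by
  have hj := Finset.mem_Icc.1 hj
  rw [monicOfCoeffs, coeff_add, coeff_X_pow, if_neg (by omega), zero_add, finsetSum_coeff,
    Finset.sum_eq_single_of_mem j (Finset.mem_Icc.2 hj) fun i hi hij => ?_, coeff_C_mul_X_pow,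
    if_pos rfl]
  have hi := Finset.mem_Icc.1 hi
  rw [coeff_C_mul_X_pow, if_neg (by omega)]

theorem map_monicOfCoeffs_ne_X_pow {S : Type*} [Semiring S] (φ : R →+* S) {n j : ℕ}
    (hj : j ∈ Finset.Icc 1 n) {a : ℕ → R} (ha : φ (a j) ≠ 0) :
    (monicOfCoeffs n a).map φ ≠ X ^ n := fun h => ha <| by
  have hcoeff := congrArg (coeff · (n - j)) h
  simp only [map_monicOfCoeffs, coeff_monicOfCoeffs hj, coeff_X_pow] at hcoeff
  rwa [if_neg (by have := Finset.mem_Icc.1 hj; omega)] at hcoeff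

end MonicOfCoeffs

theorem Polynomial.Monic.eq_X_pow_of_dvd_X_pow {R : Type*} [CommRing R] [IsDomain R] {P : R[X]}
    (hP : P.Monic) {k : ℕ} (h : P ∣ X ^ k) : P = X ^ P.natDegree := by
  obtain ⟨i, -, hi⟩ := (dvd_prime_pow prime_X k).1 h
  rw [eq_of_monic_of_associated hP (monic_X_pow i) hi, natDegree_X_pow]

section TwistedOrbit

variable {O K M : Type*} [CommRing O] [Semiring K] [AddCommMonoid M] [Module K M]

noncomputable def orbitEval (ι : O →+* K) (Ψ : M → M) (x : M) : O[X] →+ M where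
  toFun f := f.sum fun i c => ι c • Ψ^[i] x
  map_zero' := sum_zero_index _
  map_add' f g := sum_add_index _ _ _ (fun _ => by simp) fun _ _ _ => by simp [add_smul]

section Eval

variable (ι : O →+* K) (Ψ : M → M) (x : M)

theorem orbitEval_monomial (i : ℕ) (c : O) :
    orbitEval ι Ψ x (monomial i c) = ι c • Ψ^[i] x :=
  sum_monomial_index (f := fun i c => ι c • Ψ^[i] x) _ (by simp)

theorem orbitEval_C_mul (d : O) (f : O[X]) :
    orbitEval ι Ψ x (C d * f) = ι d • orbitEval ι Ψ x f := by
  induction f using Polynomial.induction_on' with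
  | add f g hf hg => rw [mul_add, map_add, map_add, hf, hg, smul_add]
  | monomial i c => rw [C_mul_monomial, orbitEval_monomial, orbitEval_monomial, map_mul, mul_smul]

theorem orbitEval_monicOfCoeffs (n : ℕ) (a : ℕ → O) :
    orbitEval ι Ψ x (monicOfCoeffs n a) =
      Ψ^[n] x + ∑ i ∈ Finset.Icc 1 n, ι (a i) • Ψ^[n - i] x := by
  rw [monicOfCoeffs, map_add, map_sum, X_pow_eq_monomial, orbitEval_monomial, map_one, one_smul]
  simp only [C_mul_X_pow_eq_monomial, orbitEval_monomial]

end Eval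

noncomputable def twistedXPowMod (τ : O →+* O) (p : O[X]) : ℕ → O[X]
  | 0 => 1
  | k + 1 => (X * (twistedXPowMod τ p k).map τ) %ₘ p

theorem natDegree_twistedXPowMod_lt (τ : O →+* O) {p : O[X]} (hp : p.Monic)
    (hp0 : 0 < p.natDegree) (k : ℕ) : (twistedXPowMod τ p k).natDegree < p.natDegree := by
  cases k with
  | zero => simpa [twistedXPowMod] using hp0
  | succ k => exact natDegree_modByMonic_lt _ hp fun h => by simp [h] at hp0

variable {τ : O →+* O} {p : O[X]}

theorem dvd_X_pow_sub_map_twistedXPowMod {F : Type*} [CommRing F] {φ : O →+* F}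
    (hφ : φ.comp τ = φ) (hp : p.Monic) (k : ℕ) :
    p.map φ ∣ X ^ k - (twistedXPowMod τ p k).map φ := by
  induction k with
  | zero => simp [twistedXPowMod]
  | succ k ih =>
    set g := X * (twistedXPowMod τ p k).map φ
    have hg : (twistedXPowMod τ p (k + 1)).map φ = g %ₘ p.map φ := by
      rw [twistedXPowMod, map_modByMonic φ hp, Polynomial.map_mul, map_X, map_map, hφ]
    have hdiv := modByMonic_add_div g (p.map φ)
    have hstep : X ^ (k + 1) - g %ₘ p.map φ =
        X * (X ^ k - (twistedXPowMod τ p k).map φ) + p.map φ * (g /ₘ p.map φ) := by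
      linear_combination (-1 : F[X]) * hdiv
    rw [hg, hstep]
    exact (dvd_mul_of_dvd_right ih X).add (dvd_mul_right _ _)

theorem exists_coeff_twistedXPowMod_ne_zero {F : Type*} [CommRing F] [IsDomain F] {φ : O →+* F}
    (hφ : φ.comp τ = φ) (hp : p.Monic) (hp0 : 0 < p.natDegree)
    (hpX : p.map φ ≠ X ^ p.natDegree) (k : ℕ) :
    ∃ i < p.natDegree, φ ((twistedXPowMod τ p k).coeff i) ≠ 0 := by
  have hmap : (twistedXPowMod τ p k).map φ ≠ 0 := by
    intro h0
    have hdvd := dvd_X_pow_sub_map_twistedXPowMod hφ hp k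
    rw [h0, sub_zero] at hdvd
    exact hpX <| by simpa [hp.natDegree_map φ] using (hp.map φ).eq_X_pow_of_dvd_X_pow hdvd
  refine ⟨((twistedXPowMod τ p k).map φ).natDegree,
    natDegree_map_le.trans_lt (natDegree_twistedXPowMod_lt τ hp hp0 k), ?_⟩
  rw [← coeff_map]
  exact leadingCoeff_ne_zero.2 hmap

variable (ι : O →+* K) {σ : K →+* K} (Ψ : M →ₛₗ[σ] M) (x : M)

theorem apply_orbitEval (hτ : ∀ c, σ (ι c) = ι (τ c)) (f : O[X]) :
    Ψ (orbitEval ι Ψ x f) = orbitEval ι Ψ x (X * f.map τ) := by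
  induction f using Polynomial.induction_on' with
  | add f g hf hg => rw [map_add, map_add, hf, hg, Polynomial.map_add, mul_add, map_add]
  | monomial i c =>
    rw [orbitEval_monomial, map_smulₛₗ, hτ, map_monomial, X_mul_monomial, orbitEval_monomial,
      Function.iterate_succ_apply']

theorem orbitEval_twistedXPowMod (hτ : ∀ c, σ (ι c) = ι (τ c)) (hp : p.Monic)
    (hp0 : 0 < p.natDegree) (hpx : orbitEval ι Ψ x p = 0) (k : ℕ) :
    orbitEval ι Ψ x (twistedXPowMod τ p k) = Ψ^[k] x := by
  induction k with
  | zero => rw [twistedXPowMod, ← monomial_zero_one, orbitEval_monomial, map_one, one_smul]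
  | succ k ih =>
    set h := X * (twistedXPowMod τ p k).map τ
    have hdeg : h.natDegree ≤ p.natDegree :=
      natDegree_mul_le.trans <| (add_le_add natDegree_X_le natDegree_map_le).trans <|
        by have := natDegree_twistedXPowMod_lt τ hp hp0 k; omega
    -- `orbitEval` kills `C d * p` but not `g * p` for non-constant `g` (`Ψ` twists coefficients).
    have hquot : h /ₘ p = C ((h /ₘ p).coeff 0) :=
      eq_C_of_natDegree_eq_zero <| by rw [natDegree_divByMonic h hp]; omega
    have hmod : orbitEval ι Ψ x (h %ₘ p) = orbitEval ι Ψ x h := by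
      conv_rhs => rw [← modByMonic_add_div h p, hquot, mul_comm, map_add, orbitEval_C_mul, hpx,
        smul_zero, add_zero]
    rw [Function.iterate_succ_apply', ← ih, apply_orbitEval ι Ψ x hτ, twistedXPowMod, hmod]

theorem iterate_eq_sum_coeff_twistedXPowMod_smul (hτ : ∀ c, σ (ι c) = ι (τ c))
    (hp : p.Monic) (hp0 : 0 < p.natDegree) (hpx : orbitEval ι Ψ x p = 0) {n : ℕ}
    (hpn : p.natDegree = n) (k : ℕ) :
    Ψ^[k] x = ∑ i : Fin n, ι ((twistedXPowMod τ p k).coeff i) • Ψ^[i] x := by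
  subst hpn
  rw [← orbitEval_twistedXPowMod ι Ψ x hτ hp hp0 hpx k]
  exact (sum_fin (fun i c => ι c • Ψ^[i] x) (fun i => by simp) <|
    degree_le_natDegree.trans_lt <| Nat.cast_lt.2 <| natDegree_twistedXPowMod_lt τ hp hp0 k).symm

end TwistedOrbit

open HahnSeries

section LaurentSeries

variable {R : Type*} [Field R] {q : R} {σ : LaurentSeries R ≃+* LaurentSeries R}

theorem apply_ofPowerSeries_eq_ofPowerSeries_rescale
    (hσ : ∀ f (k : ℤ), (σ f).coeff k = q ^ k * f.coeff k) (f : PowerSeries R) :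
    σ (ofPowerSeries ℤ R f) = ofPowerSeries ℤ R (PowerSeries.rescale q f) := by
  ext k
  rw [hσ, PowerSeries.coeff_coe, PowerSeries.coeff_coe]
  split_ifs with hk
  · rw [mul_zero]
  · rw [PowerSeries.coeff_rescale, ← zpow_natCast, Int.natAbs_of_nonneg (not_lt.1 hk)]

theorem apply_single_eq_single_zpow_mul (hσ : ∀ f (k : ℤ), (σ f).coeff k = q ^ k * f.coeff k)
    (m : ℤ) (c : R) : σ (single m c) = single m (q ^ m * c) := by
  ext k
  rw [hσ, coeff_single, coeff_single]
  split_ifs with h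
  · rw [h]
  · rw [mul_zero]

theorem constantCoeff_comp_rescale (q : R) :
    (PowerSeries.constantCoeff : PowerSeries R →+* R).comp (PowerSeries.rescale q) =
      PowerSeries.constantCoeff := by
  refine RingHom.ext fun f => ?_
  rw [RingHom.comp_apply, ← PowerSeries.coeff_zero_eq_constantCoeff_apply,
    PowerSeries.coeff_rescale, pow_zero, one_mul, PowerSeries.coeff_zero_eq_constantCoeff_apply]

variable {M : Type*} [AddCommMonoid M] [Module (LaurentSeries R) M]

theorem iterate_eq_single_smul_iterate (hσ : ∀ f (k : ℤ), (σ f).coeff k = q ^ k * f.coeff k)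
    (Ψ : M →ₛₗ[(σ : LaurentSeries R →+* LaurentSeries R)] M) {Φ : M → M} {μ : ℤ}
    (hΦ : ∀ y, Φ y = single μ (1 : R) • Ψ y) (y : M) (k : ℕ) :
    ∃ u : R, u ≠ 0 ∧ Φ^[k] y = single (μ * k) u • Ψ^[k] y := by
  induction k with
  | zero => exact ⟨1, one_ne_zero, by simp⟩
  | succ k ih =>
    obtain ⟨u, hu, hk⟩ := ih
    have hqu : q ^ (μ * k) * u ≠ 0 := by
      have h := (map_ne_zero σ).2 (single_ne_zero (a := μ * (k : ℤ)) hu)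
      rw [apply_single_eq_single_zpow_mul hσ] at h
      exact single_eq_zero_iff.not.1 h
    refine ⟨q ^ (μ * k) * u, hqu, ?_⟩
    rw [Function.iterate_succ_apply', hk, hΦ, map_smulₛₗ, RingHom.coe_coe,
      apply_single_eq_single_zpow_mul hσ, Function.iterate_succ_apply', smul_smul,
      single_mul_single, one_mul, Nat.cast_succ, mul_add_one, add_comm]

variable {n : ℕ} (v : Fin n → M)

theorem single_smul_sum_eq_single_sub_one_smul_sum (m : ℤ) (u : R) (b : Fin n → PowerSeries R) :
    single m u • ∑ i, ofPowerSeries ℤ R (b i) • v i =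
      single (m - 1) (1 : R) •
        ∑ i, ofPowerSeries ℤ R (PowerSeries.X * PowerSeries.C u * b i) • v i := by
  simp only [Finset.smul_sum, smul_smul, map_mul, ofPowerSeries_X, ofPowerSeries_C, C_apply,
    ← mul_assoc, single_mul_single, sub_add_cancel, add_zero, one_mul]

theorem not_exists_single_smul_sum_eq_single_add_one_smul_sum
    (hv : LinearIndependent (LaurentSeries R) v) {b : Fin n → PowerSeries R}
    (hb : ∃ i, PowerSeries.constantCoeff (b i) ≠ 0) {u : R} (hu : u ≠ 0) (m : ℤ) :
    ¬ ∃ c : Fin n → PowerSeries R, single m u • ∑ i, ofPowerSeries ℤ R (b i) • v i =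
      single (m + 1) (1 : R) • ∑ i, ofPowerSeries ℤ R (c i) • v i := by
  rintro ⟨c, hc⟩
  obtain ⟨i, hi⟩ := hb
  simp only [Finset.smul_sum, smul_smul] at hc
  have hcoeff := congrArg (fun f : LaurentSeries R => f.coeff m)
    (Fintype.linearIndependent_iffₛ.1 hv _ _ hc i)
  have h0 :
      (single m u * ofPowerSeries ℤ R (b i)).coeff m = u * PowerSeries.constantCoeff (b i) := by
    simpa [PowerSeries.coeff_coe] using
      coeff_single_mul_add (a := 0) (b := m) (r := u) (x := ofPowerSeries ℤ R (b i))
  have h1 : (single (m + 1) (1 : R) * ofPowerSeries ℤ R (c i)).coeff m = 0 := by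
    simpa [PowerSeries.coeff_coe] using
      coeff_single_mul_add (a := -1) (b := m + 1) (r := (1 : R)) (x := ofPowerSeries ℤ R (c i))
  exact mul_ne_zero hu hi (h0.symm.trans (hcoeff.trans h1))

end LaurentSeries

theorem stmt_17_general (q : ℂ)
    (σ : RingAut (LaurentSeries ℂ))
    (hσ : ∀ (f : LaurentSeries ℂ) (k : ℤ), (σ f).coeff k = q ^ k * f.coeff k)
    (n : ℕ) (μ : ℤ)
    (Φ Ψ : (Fin n → LaurentSeries ℂ) → Fin n → LaurentSeries ℂ)
    (hΦadd : ∀ x y, Φ (x + y) = Φ x + Φ y)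
    (hΦsmul : ∀ (c : LaurentSeries ℂ) (x : Fin n → LaurentSeries ℂ), Φ (c • x) = σ c • Φ x)
    (hΨ : ∀ y, Ψ y = (HahnSeries.single (-μ) (1 : ℂ) : LaurentSeries ℂ) • Φ y)
    (x : Fin n → LaurentSeries ℂ)
    (hcyc : LinearIndependent (LaurentSeries ℂ) fun i : Fin n => Ψ^[(i : ℕ)] x)
    (a : ℕ → PowerSeries ℂ)
    (hmin : Ψ^[n] x + ∑ i ∈ Finset.Icc 1 n,
        (HahnSeries.ofPowerSeries ℤ ℂ (a i)) • Ψ^[n - i] x = 0)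
    (hpure : ∃ i ∈ Finset.Icc 1 n, PowerSeries.constantCoeff (a i) ≠ 0) :
    ∃ C : ℤ, 0 ≤ C ∧ ∀ k : ℕ,
      (∃ c : Fin n → PowerSeries ℂ,
        Φ^[k] x = (HahnSeries.single (μ * k - C) (1 : ℂ) : LaurentSeries ℂ) •
          ∑ i : Fin n, (HahnSeries.ofPowerSeries ℤ ℂ (c i)) • Ψ^[(i : ℕ)] x) ∧
      ¬ ∃ c : Fin n → PowerSeries ℂ,
        Φ^[k] x = (HahnSeries.single (μ * k + C) (1 : ℂ) : LaurentSeries ℂ) •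
          ∑ i : Fin n, (HahnSeries.ofPowerSeries ℤ ℂ (c i)) • Ψ^[(i : ℕ)] x := by
  obtain ⟨j, hj, hj0⟩ := hpure
  let Ψ' : (Fin n → LaurentSeries ℂ) →ₛₗ[(σ : LaurentSeries ℂ →+* LaurentSeries ℂ)]
      (Fin n → LaurentSeries ℂ) :=
    { toFun := Ψ
      map_add' := fun y w => by
        rw [hΨ, hΨ, hΨ, hΦadd]
        exact smul_add (M := LaurentSeries ℂ) (A := Fin n → LaurentSeries ℂ) _ _ _
      map_smul' := fun c y => by rw [hΨ, hΨ, hΦsmul, smul_comm, RingHom.coe_coe] }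
  have hΦ : ∀ y, Φ y = single μ (1 : ℂ) • Ψ' y := fun y => by
    rw [LinearMap.coe_mk, AddHom.coe_mk, hΨ, smul_smul, single_mul_single, add_neg_cancel,
      mul_one, single_zero_one, one_smul]
  set p := monicOfCoeffs n a
  have hp : p.Monic := monic_monicOfCoeffs n a
  have hpn : p.natDegree = n := natDegree_monicOfCoeffs n a
  have hp0 : 0 < p.natDegree := by have := Finset.mem_Icc.1 hj; omega
  have hpx : orbitEval (ofPowerSeries ℤ ℂ) Ψ' x p = 0 :=
    (orbitEval_monicOfCoeffs _ _ x n a).trans hmin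
  have hpX : p.map PowerSeries.constantCoeff ≠ X ^ p.natDegree :=
    hpn ▸ map_monicOfCoeffs_ne_X_pow _ hj hj0
  refine ⟨1, zero_le_one, fun k => ?_⟩
  obtain ⟨u, hu, hΦk⟩ := iterate_eq_single_smul_iterate hσ Ψ' hΦ x k
  obtain ⟨i, hi, hfi⟩ :=
    exists_coeff_twistedXPowMod_ne_zero (constantCoeff_comp_rescale q) hp hp0 hpX k
  rw [hΦk, iterate_eq_sum_coeff_twistedXPowMod_smul _ Ψ' x
    (apply_ofPowerSeries_eq_ofPowerSeries_rescale hσ) hp hp0 hpx hpn k]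
  exact ⟨⟨_, single_smul_sum_eq_single_sub_one_smul_sum _ _ _ _⟩,
    not_exists_single_smul_sum_eq_single_add_one_smul_sum _ hcyc ⟨⟨i, hpn ▸ hi⟩, hfi⟩ hu _⟩

/-- Slopes and growth of iterates (Proposition 3.1.10, first formula): let `|q| > 1`,
`K = ℂ((z))` with `σ : f(z) ↦ f(qz)`, and let `(M, Φ)` be a q-difference module of rank
`n` which is pure of integer slope `μ`:  with `Ψ = z^{-μ}Φ`, a cyclic vector `x` has
minimal polynomial `σ^n + a_1σ^{n-1} + ⋯ + a_n` (for `Ψ`) with all `a_i ∈ O = ℂ[[z]]` and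
some `a_i(0) ≠ 0`.  For the lattice `Λ = Σ_{i<n} O·Ψ^i(x)` and
`v_Λ(y) = sup{j : y ∈ z^jΛ}`, one has `v_Λ(Φ^k(x)) = μk + O(1)` for `k ∈ ℕ`; i.e. there
is `C ≥ 0` with `Φ^k(x) ∈ z^{μk−C}Λ` and `Φ^k(x) ∉ z^{μk+C}Λ` for all `k`. -/
theorem stmt_17 (q : ℂ) (hq : 1 < ‖q‖)
    (σ : RingAut (LaurentSeries ℂ))
    (hσ : ∀ (f : LaurentSeries ℂ) (k : ℤ), (σ f).coeff k = q ^ k * f.coeff k)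
    (n : ℕ) (hn : 1 ≤ n) (μ : ℤ)
    (Φ Ψ : (Fin n → LaurentSeries ℂ) → Fin n → LaurentSeries ℂ)
    (hΦbij : Function.Bijective Φ)
    (hΦadd : ∀ x y, Φ (x + y) = Φ x + Φ y)
    (hΦsmul : ∀ (c : LaurentSeries ℂ) (x : Fin n → LaurentSeries ℂ), Φ (c • x) = σ c • Φ x)
    (hΨ : ∀ y, Ψ y = (HahnSeries.single (-μ) (1 : ℂ) : LaurentSeries ℂ) • Φ y)
    (x : Fin n → LaurentSeries ℂ)
    (hcyc : LinearIndependent (LaurentSeries ℂ) fun i : Fin n => Ψ^[(i : ℕ)] x)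
    (a : ℕ → PowerSeries ℂ)
    (hmin : Ψ^[n] x + ∑ i ∈ Finset.Icc 1 n,
        (HahnSeries.ofPowerSeries ℤ ℂ (a i)) • Ψ^[n - i] x = 0)
    (hpure : ∃ i ∈ Finset.Icc 1 n, PowerSeries.constantCoeff (a i) ≠ 0) :
    ∃ C : ℤ, 0 ≤ C ∧ ∀ k : ℕ,
      (∃ c : Fin n → PowerSeries ℂ,
        Φ^[k] x = (HahnSeries.single (μ * k - C) (1 : ℂ) : LaurentSeries ℂ) •
          ∑ i : Fin n, (HahnSeries.ofPowerSeries ℤ ℂ (c i)) • Ψ^[(i : ℕ)] x) ∧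
      ¬ ∃ c : Fin n → PowerSeries ℂ,
        Φ^[k] x = (HahnSeries.single (μ * k + C) (1 : ℂ) : LaurentSeries ℂ) •
          ∑ i : Fin n, (HahnSeries.ofPowerSeries ℤ ℂ (c i)) • Ψ^[(i : ℕ)] x :=
  stmt_17_general q σ hσ n μ Φ Ψ hΦadd hΦsmul hΨ x hcyc a hmin hpure
end

section
/- Let functions r : ℚ → ℕ with finite support correspond to Newton polygons. If P₁, P₂ are nonzero elements of the Ore ring D_q over K = ℂ((z)) (q not a root of unity) whose slope-μ characteristic equations satisfy the multiplicativity deg(char(P₁P₂, μ)) = deg(char(P₁, μ)) + deg(char(P₂, μ)) for every μ ∈ ℚ, and r_P(μ) equals the absolute degree of the characteristic equation of P at μ, then the Newton function is additive: r_{P₁P₂} = r_{P₁} + r_{P₂}; equivalently N(P₁P₂) = N(P₁) + N(P₂) (Minkowski sum of Newton polygons). -/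
open Pointwise

/-- Multiplication in the Ore ring `D_q = K⟨σ, σ⁻¹⟩` over `K = ℂ((z))`
(relation `σ·a = σ(a)·σ`), elements being finitely supported coefficient families. -/
noncomputable def skewMul (σ : RingAut (LaurentSeries ℂ))
    (P Q : ℤ →₀ LaurentSeries ℂ) : ℤ →₀ LaurentSeries ℂ :=
  P.sum fun i a => Q.sum fun j b => Finsupp.single (i + j) (a * (σ ^ i) b)

/-- The Newton polygon of `P = Σ aᵢ σ^i`: the convex hull of
`{(i, j) : i ∈ supp P, j ≥ v₀(aᵢ)}` in `ℝ²`. -/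
noncomputable def newtonPolygon (P : ℤ →₀ LaurentSeries ℂ) : Set (ℝ × ℝ) :=
  convexHull ℝ
    {p : ℝ × ℝ | ∃ i ∈ P.support, ∃ j : ℤ, (P i).order ≤ j ∧ p = ((i : ℝ), (j : ℝ))}

/-!
The inclusion `N(P₁P₂) ⊆ N(P₁) + N(P₂)` holds because `σ` preserves `v₀`, so every coefficient
`Σ aᵢ σ^i(b_j)` of `P₁P₂` has valuation at least that of one of its terms.

For the reverse inclusion, cut the Minkowski sum off at a large height `H`: it becomes a polytope,
hence the convex hull of its extreme points. A lower extreme point above `k` comes from a unique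
pair `i + j = k` minimising `v₀(aᵢ) + v₀(b_j)`, since two minimising pairs could exchange their
second indices and exhibit the point as a midpoint. For such a pair the coefficient of
`z^(v₀(aᵢ) + v₀(b_j))` in `(P₁P₂)ₖ` comes from the single term `aᵢ σ^i(b_j)`, so the point lies in
`N(P₁P₂)`. The upper corners sit above the extreme indices, which are such pairs as well.
-/

open HahnSeries

section ConvexGeometry

variable {E : Type*} [AddCommGroup E] [Module ℝ E] [TopologicalSpace E] [T2Space E]
  [IsTopologicalAddGroup E] [ContinuousSMul ℝ E] [LocallyConvexSpace ℝ E]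

theorem Set.Finite.convexHull_subset_of_extremePoints_subset {X S : Set E} (hX : X.Finite)
    (hS : Convex ℝ S) (hext : (convexHull ℝ X).extremePoints ℝ ⊆ S) : convexHull ℝ X ⊆ S := by
  have hext_fin : ((convexHull ℝ X).extremePoints ℝ).Finite :=
    hX.subset extremePoints_convexHull_subset
  calc convexHull ℝ X
      = closure (convexHull ℝ ((convexHull ℝ X).extremePoints ℝ)) :=
        (closure_convexHull_extremePoints (hX.isCompact_convexHull ℝ) (convex_convexHull ℝ X)).symm
    _ = convexHull ℝ ((convexHull ℝ X).extremePoints ℝ) :=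
        (hext_fin.isClosed_convexHull ℝ).closure_eq
    _ ⊆ S := convexHull_min hext hS

end ConvexGeometry

section Plane

variable {S : Set (ℝ × ℝ)}

theorem Convex.mk_mem_of_mem_Icc (hS : Convex ℝ S) {x a b y : ℝ} (ha : (x, a) ∈ S)
    (hb : (x, b) ∈ S) (hy : y ∈ Set.Icc a b) : (x, y) ∈ S := by
  refine hS.segment_subset ha hb ?_
  rw [← Prod.image_mk_segment_right, segment_eq_Icc (hy.1.trans hy.2)]
  exact ⟨y, hy, rfl⟩

theorem Convex.mk_mem_of_forall_int_le (hS : Convex ℝ S) {x : ℝ} {v : ℤ}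
    (h : ∀ n : ℤ, v ≤ n → (x, (n : ℝ)) ∈ S) {y : ℝ} (hy : (v : ℝ) ≤ y) : (x, y) ∈ S := by
  have hv : v ≤ ⌊y⌋ := Int.le_floor.2 hy
  refine hS.mk_mem_of_mem_Icc (h _ hv) (h (⌊y⌋ + 1) (by omega)) ⟨Int.floor_le y, ?_⟩
  push_cast
  exact (Int.lt_floor_add_one y).le

end Plane

section MinkowskiSum

variable {α : Type*} {A B : Finset ℤ}

def IsUniqueMinPair [Add α] [LT α] (A B : Finset ℤ) (f g : ℤ → α) (i j : ℤ) : Prop :=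
  i ∈ A ∧ j ∈ B ∧ ∀ i' ∈ A, ∀ j' ∈ B, i' + j' = i + j → i' ≠ i → f i + g j < f i' + g j'

theorem isUniqueMinPair_min' [Add α] [LT α] {f g : ℤ → α} (hA : A.Nonempty) (hB : B.Nonempty) :
    IsUniqueMinPair A B f g (A.min' hA) (B.min' hB) := by
  refine ⟨A.min'_mem hA, B.min'_mem hB, fun i' hi' j' hj' hsum hne => absurd hsum ?_⟩
  have := A.min'_le i' hi'
  have := B.min'_le j' hj'
  omega

theorem isUniqueMinPair_max' [Add α] [LT α] {f g : ℤ → α} (hA : A.Nonempty) (hB : B.Nonempty) :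
    IsUniqueMinPair A B f g (A.max' hA) (B.max' hB) := by
  refine ⟨A.max'_mem hA, B.max'_mem hB, fun i' hi' j' hj' hsum hne => absurd hsum ?_⟩
  have := A.le_max' i' hi'
  have := B.le_max' j' hj'
  omega

/-- For `H` above every `f i + g j`, the convex hull of these points is the Minkowski sum of the
Newton polygons of `f` on `A` and of `g` on `B`, cut off at height `H`. -/
def truncatedSumPoints (A B : Finset ℤ) (f g : ℤ → ℝ) (H : ℝ) : Set (ℝ × ℝ) :=
  (fun p : ℤ × ℤ => (((p.1 + p.2 : ℤ) : ℝ), f p.1 + g p.2)) '' ↑(A ×ˢ B) ∪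
    (fun p : ℤ × ℤ => (((p.1 + p.2 : ℤ) : ℝ), H)) '' ↑(A ×ˢ B)

variable {f g : ℤ → ℝ} {H : ℝ}

theorem finite_truncatedSumPoints : (truncatedSumPoints A B f g H).Finite :=
  ((A ×ˢ B).finite_toSet.image _).union ((A ×ˢ B).finite_toSet.image _)

theorem mk_mem_convexHull_truncatedSumPoints {i j : ℤ} (hi : i ∈ A) (hj : j ∈ B) {y : ℝ}
    (hy : y ∈ Set.Icc (f i + g j) H) :
    (((i + j : ℤ) : ℝ), y) ∈ convexHull ℝ (truncatedSumPoints A B f g H) :=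
  (convex_convexHull ℝ _).mk_mem_of_mem_Icc
    (subset_convexHull ℝ _ (Or.inl ⟨(i, j), Finset.mem_product.2 ⟨hi, hj⟩, rfl⟩))
    (subset_convexHull ℝ _ (Or.inr ⟨(i, j), Finset.mem_product.2 ⟨hi, hj⟩, rfl⟩)) hy

theorem isUniqueMinPair_of_mem_extremePoints {c : ℝ}
    (hc : ∀ i ∈ A, ∀ j ∈ B, |f i + g j| ≤ c) (hcH : 2 * c ≤ H) {i j : ℤ} (hi : i ∈ A)
    (hj : j ∈ B) (he : (((i + j : ℤ) : ℝ), f i + g j) ∈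
      (convexHull ℝ (truncatedSumPoints A B f g H)).extremePoints ℝ) :
    IsUniqueMinPair A B f g i j := by
  refine ⟨hi, hj, fun i' hi' j' hj' hsum hne => ?_⟩
  by_contra! hle
  -- exchanging `j` and `j'` gives two points whose midpoint lies on or below `e`
  obtain ⟨d, hd⟩ : ∃ d : ℝ, d = (f i + g j - (f i' + g j')) / 2 := ⟨_, rfl⟩
  obtain ⟨_, _⟩ := abs_le.1 (hc i hi j hj)
  obtain ⟨_, _⟩ := abs_le.1 (hc i' hi' j' hj')
  obtain ⟨_, _⟩ := abs_le.1 (hc i hi j' hj')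
  obtain ⟨_, _⟩ := abs_le.1 (hc i' hi' j hj)
  have h₁ := mk_mem_convexHull_truncatedSumPoints (H := H) hi hj' (y := f i + g j' + d)
    ⟨by linarith, by linarith⟩
  have h₂ := mk_mem_convexHull_truncatedSumPoints (H := H) hi' hj (y := f i' + g j + d)
    ⟨by linarith, by linarith⟩
  have hsum' : (i' : ℝ) + j' = i + j := by exact_mod_cast hsum
  have hmid := he.2 h₁ h₂ ⟨1 / 2, 1 / 2, by norm_num, by norm_num, by norm_num, by
    refine Prod.ext ?_ ?_
    · simp only [Prod.fst_add, Prod.smul_fst, smul_eq_mul]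
      push_cast
      linarith
    · simp only [Prod.snd_add, Prod.smul_snd, smul_eq_mul]
      linarith⟩
  have : ((i + j' : ℤ) : ℝ) = ((i + j : ℤ) : ℝ) := congrArg Prod.fst hmid
  have : i + j' = i + j := by exact_mod_cast this
  omega

theorem eq_min'_or_eq_max'_of_mem_extremePoints (hA : A.Nonempty) (hB : B.Nonempty) {i j : ℤ}
    (hi : i ∈ A) (hj : j ∈ B)
    (he : (((i + j : ℤ) : ℝ), H) ∈ (convexHull ℝ (truncatedSumPoints A B f g H)).extremePoints ℝ) :
    i + j = A.min' hA + B.min' hB ∨ i + j = A.max' hA + B.max' hB := by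
  rcases (add_le_add (A.min'_le i hi) (B.min'_le j hj)).eq_or_lt with hlo | hlo
  · exact .inl hlo.symm
  rcases (add_le_add (A.le_max' i hi) (B.le_max' j hj)).eq_or_lt with hhi | hhi
  · exact .inr hhi
  have hlo' : ((A.min' hA + B.min' hB : ℤ) : ℝ) < ((i + j : ℤ) : ℝ) := by exact_mod_cast hlo
  have hhi' : ((i + j : ℤ) : ℝ) < ((A.max' hA + B.max' hB : ℤ) : ℝ) := by exact_mod_cast hhi
  have hend := he.2
    (subset_convexHull ℝ _ (Or.inr ⟨(A.min' hA, B.min' hB),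
      Finset.mem_product.2 ⟨A.min'_mem hA, B.min'_mem hB⟩, rfl⟩))
    (subset_convexHull ℝ _ (Or.inr ⟨(A.max' hA, B.max' hB),
      Finset.mem_product.2 ⟨A.max'_mem hA, B.max'_mem hB⟩, rfl⟩))
    (by
      rw [← Prod.image_mk_openSegment_left, openSegment_eq_Ioo (hlo'.trans hhi')]
      exact ⟨_, ⟨hlo', hhi'⟩, rfl⟩)
  exact absurd (congrArg Prod.fst hend) hlo'.ne

theorem Convex.mk_mem_of_forall_isUniqueMinPair {S : Set (ℝ × ℝ)} (hS : Convex ℝ S)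
    (hS' : ∀ i j, IsUniqueMinPair A B f g i j → ∀ y, f i + g j ≤ y → (((i + j : ℤ) : ℝ), y) ∈ S)
    {i j : ℤ} (hi : i ∈ A) (hj : j ∈ B) {y : ℝ} (hy : f i + g j ≤ y) :
    (((i + j : ℤ) : ℝ), y) ∈ S := by
  classical
  obtain ⟨c, hc⟩ : ∃ c : ℝ, ∀ i ∈ A, ∀ j ∈ B, |f i + g j| ≤ c :=
    ⟨∑ p ∈ A ×ˢ B, |f p.1 + g p.2|, fun i hi j hj =>
      Finset.single_le_sum (f := fun p => |f p.1 + g p.2|) (fun _ _ => abs_nonneg _)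
        (Finset.mem_product.2 ⟨hi, hj⟩ : (i, j) ∈ A ×ˢ B)⟩
  have hc0 : 0 ≤ c := (abs_nonneg _).trans (hc i hi j hj)
  obtain ⟨H, hyH, hcH⟩ : ∃ H : ℝ, y ≤ H ∧ 2 * c ≤ H :=
    ⟨|y| + 2 * c, by linarith [le_abs_self y], by linarith [abs_nonneg y]⟩
  have hbelow : ∀ i ∈ A, ∀ j ∈ B, f i + g j ≤ H := fun i hi j hj => by
    linarith [le_abs_self (f i + g j), hc i hi j hj]
  refine finite_truncatedSumPoints.convexHull_subset_of_extremePoints_subset hS ?_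
    (mk_mem_convexHull_truncatedSumPoints hi hj ⟨hy, hyH⟩)
  intro e he
  rcases extremePoints_convexHull_subset he with ⟨⟨i, j⟩, hij, rfl⟩ | ⟨⟨i, j⟩, hij, rfl⟩
  · obtain ⟨hi, hj⟩ := Finset.mem_product.1 hij
    exact hS' i j (isUniqueMinPair_of_mem_extremePoints hc hcH hi hj he) _ le_rfl
  · obtain ⟨hi, hj⟩ := Finset.mem_product.1 hij
    show (((i + j : ℤ) : ℝ), H) ∈ S
    have hA : A.Nonempty := ⟨i, hi⟩
    have hB : B.Nonempty := ⟨j, hj⟩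
    rcases eq_min'_or_eq_max'_of_mem_extremePoints hA hB hi hj he with h | h
    · rw [h]
      exact hS' _ _ (isUniqueMinPair_min' hA hB) H (hbelow _ (A.min'_mem hA) _ (B.min'_mem hB))
    · rw [h]
      exact hS' _ _ (isUniqueMinPair_max' hA hB) H (hbelow _ (A.max'_mem hA) _ (B.max'_mem hB))

end MinkowskiSum

/-- `σ` is the `q`-dilation `f(z) ↦ f(qz)` of `ℂ((z))`. -/
def IsQDilation (q : ℂ) (σ : RingAut (LaurentSeries ℂ)) : Prop :=
  ∀ (f : LaurentSeries ℂ) (k : ℤ), (σ f).coeff k = q ^ k * f.coeff k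

namespace IsQDilation

variable {q : ℂ} {σ : RingAut (LaurentSeries ℂ)}

theorem coeff_zpow_apply (hq0 : q ≠ 0) (hσ : IsQDilation q σ) (n : ℤ) (f : LaurentSeries ℂ)
    (k : ℤ) : ((σ ^ n) f).coeff k = (q ^ k) ^ n * f.coeff k := by
  induction n using Int.induction_on generalizing f with
  | zero => simp
  | succ n ih =>
    rw [zpow_add_one, RingAut.mul_apply, ih, hσ, zpow_add_one₀ (zpow_ne_zero k hq0)]
    ring
  | pred n ih =>
    have hinv : (σ⁻¹ f).coeff k = (q ^ k)⁻¹ * f.coeff k := by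
      rw [eq_inv_mul_iff_mul_eq₀ (zpow_ne_zero k hq0), ← hσ, ← RingAut.mul_apply,
        mul_inv_cancel, RingAut.one_apply]
    rw [zpow_sub_one, RingAut.mul_apply, ih, hinv, zpow_sub_one₀ (zpow_ne_zero k hq0)]
    ring

theorem order_zpow_apply (hq0 : q ≠ 0) (hσ : IsQDilation q σ) (n : ℤ) (f : LaurentSeries ℂ) :
    ((σ ^ n) f).order = f.order := by
  have hcoeff : ∀ k, ((σ ^ n) f).coeff k = 0 ↔ f.coeff k = 0 := by
    simp [hσ.coeff_zpow_apply hq0, zpow_ne_zero, hq0]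
  rcases eq_or_ne f 0 with rfl | hf
  · simp
  have hf' : (σ ^ n) f ≠ 0 := by simpa using hf
  exact le_antisymm (order_le_of_coeff_ne_zero ((hcoeff _).not.2 (coeff_order_eq_zero.not.2 hf)))
    (order_le_of_coeff_ne_zero ((hcoeff _).not.1 (coeff_order_eq_zero.not.2 hf')))

theorem order_mul_zpow_apply (hq0 : q ≠ 0) (hσ : IsQDilation q σ) (n : ℤ)
    {a b : LaurentSeries ℂ} (ha : a ≠ 0) (hb : b ≠ 0) :
    (a * (σ ^ n) b).order = a.order + b.order := by
  rw [order_mul ha (by simpa using hb), hσ.order_zpow_apply hq0]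

end IsQDilation

theorem skewMul_apply (σ : RingAut (LaurentSeries ℂ)) (P Q : ℤ →₀ LaurentSeries ℂ) (k : ℤ) :
    skewMul σ P Q k = ∑ i ∈ P.support, P i * (σ ^ i) (Q (k - i)) := by
  classical
  simp only [skewMul, Finsupp.sum_apply, Finsupp.single_apply]
  refine Finset.sum_congr rfl fun i _ => ?_
  dsimp only [Finsupp.sum]
  rw [Finset.sum_eq_single (k - i) (fun j _ hj => if_neg (by omega))
    (fun hk => by simp [Finsupp.notMem_support_iff.1 hk]), if_pos (by ring)]

section OreRing

variable {q : ℂ} {σ : RingAut (LaurentSeries ℂ)}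

theorem exists_order_le_order_skewMul (hq0 : q ≠ 0) (hσ : IsQDilation q σ)
    {P Q : ℤ →₀ LaurentSeries ℂ} {k : ℤ} (hk : k ∈ (skewMul σ P Q).support) :
    ∃ i ∈ P.support, ∃ j ∈ Q.support, i + j = k ∧
      (P i).order + (Q j).order ≤ (skewMul σ P Q k).order := by
  have hcoeff : ∑ i ∈ P.support, (P i * (σ ^ i) (Q (k - i))).coeff (skewMul σ P Q k).order ≠ 0 := by
    rw [← coeff_sum, ← skewMul_apply]
    exact coeff_order_eq_zero.not.2 (Finsupp.mem_support_iff.1 hk)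
  obtain ⟨i, hi, hterm⟩ := Finset.exists_ne_zero_of_sum_ne_zero hcoeff
  have hQ : Q (k - i) ≠ 0 := by
    rintro hQ
    simp [hQ] at hterm
  refine ⟨i, hi, k - i, Finsupp.mem_support_iff.2 hQ, by ring, ?_⟩
  rw [← hσ.order_mul_zpow_apply hq0 i (Finsupp.mem_support_iff.1 hi) hQ]
  exact order_le_of_coeff_ne_zero hterm

theorem coeff_skewMul_ne_zero_of_isUniqueMinPair (hq0 : q ≠ 0) (hσ : IsQDilation q σ)
    {P Q : ℤ →₀ LaurentSeries ℂ} {i j : ℤ}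
    (h : IsUniqueMinPair P.support Q.support (fun i => (P i).order) (fun j => (Q j).order) i j) :
    (skewMul σ P Q (i + j)).coeff ((P i).order + (Q j).order) ≠ 0 := by
  obtain ⟨hi, hj, hmin⟩ := h
  have hP := Finsupp.mem_support_iff.1 hi
  have hQ := Finsupp.mem_support_iff.1 hj
  rw [skewMul_apply, coeff_sum, Finset.sum_eq_single i]
  · rw [add_sub_cancel_left, ← hσ.order_mul_zpow_apply hq0 i hP hQ]
    exact coeff_order_eq_zero.not.2 (mul_ne_zero hP (by simpa using hQ))
  · intro i' hi' hne
    by_cases hQ' : Q (i + j - i') = 0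
    · simp [hQ']
    refine coeff_eq_zero_of_lt_order ?_
    rw [hσ.order_mul_zpow_apply hq0 i' (Finsupp.mem_support_iff.1 hi') hQ']
    exact hmin i' hi' _ (Finsupp.mem_support_iff.2 hQ') (by ring) hne
  · exact fun h => absurd hi h

theorem newtonPolygon_skewMul_subset (hq0 : q ≠ 0) (hσ : IsQDilation q σ)
    (P Q : ℤ →₀ LaurentSeries ℂ) :
    newtonPolygon (skewMul σ P Q) ⊆ newtonPolygon P + newtonPolygon Q := by
  rw [newtonPolygon, newtonPolygon, newtonPolygon, ← convexHull_add]
  refine convexHull_mono ?_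
  rintro _ ⟨k, hk, m, hm, rfl⟩
  obtain ⟨i, hi, j, hj, rfl, hord⟩ := exists_order_le_order_skewMul hq0 hσ hk
  refine ⟨_, ⟨i, hi, _, le_rfl, rfl⟩, _, ⟨j, hj, m - (P i).order, by omega, rfl⟩, ?_⟩
  ext <;> push_cast [Prod.fst_add, Prod.snd_add] <;> ring

theorem add_subset_newtonPolygon_skewMul (hq0 : q ≠ 0) (hσ : IsQDilation q σ)
    (P Q : ℤ →₀ LaurentSeries ℂ) :
    newtonPolygon P + newtonPolygon Q ⊆ newtonPolygon (skewMul σ P Q) := by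
  have hN : Convex ℝ (newtonPolygon (skewMul σ P Q)) := convex_convexHull ℝ _
  rw [newtonPolygon, newtonPolygon, ← convexHull_add]
  refine convexHull_min ?_ hN
  rintro _ ⟨_, ⟨i, hi, m₁, hm₁, rfl⟩, _, ⟨j, hj, m₂, hm₂, rfl⟩, rfl⟩
  have hmem := hN.mk_mem_of_forall_isUniqueMinPair (A := P.support) (B := Q.support)
    (f := fun i => ((P i).order : ℝ)) (g := fun j => ((Q j).order : ℝ)) ?_ hi hj
    (y := m₁ + m₂) (by exact_mod_cast add_le_add hm₁ hm₂)
  · convert hmem using 1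
    ext <;> push_cast [Prod.fst_add, Prod.snd_add] <;> ring
  · rintro i j ⟨hi, hj, hmin⟩ y hy
    have hne := coeff_skewMul_ne_zero_of_isUniqueMinPair hq0 hσ
      ⟨hi, hj, fun i' hi' j' hj' hsum hne => by
        have hlt : ((P i).order : ℝ) + (Q j).order < (P i').order + (Q j').order :=
          hmin i' hi' j' hj' hsum hne
        exact_mod_cast hlt⟩
    refine hN.mk_mem_of_forall_int_le (fun n hn => subset_convexHull ℝ _ ?_)
      (v := (P i).order + (Q j).order) (by push_cast; exact hy)
    exact ⟨i + j, Finsupp.mem_support_iff.2 (ne_zero_of_coeff_ne_zero hne), n,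
      (order_le_of_coeff_ne_zero hne).trans hn, rfl⟩

theorem newtonPolygon_skewMul (hq0 : q ≠ 0) (hσ : IsQDilation q σ) (P Q : ℤ →₀ LaurentSeries ℂ) :
    newtonPolygon (skewMul σ P Q) = newtonPolygon P + newtonPolygon Q :=
  (newtonPolygon_skewMul_subset hq0 hσ P Q).antisymm (add_subset_newtonPolygon_skewMul hq0 hσ P Q)

end OreRing

theorem stmt_19_general (q : ℂ) (hq0 : q ≠ 0)
    (σ : RingAut (LaurentSeries ℂ))
    (hσ : ∀ (f : LaurentSeries ℂ) (k : ℤ), (σ f).coeff k = q ^ k * f.coeff k)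
    (P₁ P₂ : ℤ →₀ LaurentSeries ℂ)
    (r charDeg : (ℤ →₀ LaurentSeries ℂ) → ℚ → ℕ)
    (hmult : ∀ μ : ℚ, charDeg (skewMul σ P₁ P₂) μ = charDeg P₁ μ + charDeg P₂ μ)
    (hrdeg : ∀ (P : ℤ →₀ LaurentSeries ℂ) (μ : ℚ), r P μ = charDeg P μ) :
    (∀ μ : ℚ, r (skewMul σ P₁ P₂) μ = r P₁ μ + r P₂ μ) ∧
    newtonPolygon (skewMul σ P₁ P₂) = newtonPolygon P₁ + newtonPolygon P₂ :=
  ⟨fun μ => by rw [hrdeg, hrdeg, hrdeg, hmult], newtonPolygon_skewMul hq0 hσ P₁ P₂⟩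

/-- Theorem 1.1.9 (additivity of the Newton polygon): over `K = ℂ((z))` with `q` not a
root of unity, if the degrees of the slope-`μ` characteristic equations are
multiplicative under the product `P₁P₂` for every `μ ∈ ℚ`, and the Newton function
`r_P(μ)` equals the absolute degree of the characteristic equation of `P` at `μ`, then
the Newton function is additive, `r_{P₁P₂} = r_{P₁} + r_{P₂}`; equivalently the Newton
polygons satisfy `N(P₁P₂) = N(P₁) + N(P₂)` (Minkowski sum). -/
theorem stmt_19 (q : ℂ) (hq0 : q ≠ 0) (hq : ∀ n : ℕ, 0 < n → q ^ n ≠ 1)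
    (σ : RingAut (LaurentSeries ℂ))
    (hσ : ∀ (f : LaurentSeries ℂ) (k : ℤ), (σ f).coeff k = q ^ k * f.coeff k)
    (P₁ P₂ : ℤ →₀ LaurentSeries ℂ) (h1 : P₁ ≠ 0) (h2 : P₂ ≠ 0)
    (r charDeg : (ℤ →₀ LaurentSeries ℂ) → ℚ → ℕ)
    (hmult : ∀ μ : ℚ, charDeg (skewMul σ P₁ P₂) μ = charDeg P₁ μ + charDeg P₂ μ)
    (hrdeg : ∀ (P : ℤ →₀ LaurentSeries ℂ) (μ : ℚ), r P μ = charDeg P μ) :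
    (∀ μ : ℚ, r (skewMul σ P₁ P₂) μ = r P₁ μ + r P₂ μ) ∧
    newtonPolygon (skewMul σ P₁ P₂) = newtonPolygon P₁ + newtonPolygon P₂ :=
  stmt_19_general q hq0 σ hσ P₁ P₂ r charDeg hmult hrdeg
end
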